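/- arXiv:cs/0104001 — 5 statements merged into one kernel-verified Lean document; each statement's English description precedes it below -/
import Mathlib

section
/- Let X be an n×n Boolean adjacency matrix and define P_0 = X, P_k = P_{k-1} + P_{k-1}² + P_{k-1}³. Then I_n + P_{⌈log₂ n⌉} equals the Kleene closure X* (the reflexive-transitive closure matrix), i.e., (I_n + P_{⌈log₂ n⌉})[u,v] = 1 if and only if there is a path (possibly of length 0) from u to v. -/
/-- Boolean matrices modeled as `Prop`-valued matrices: entry is `True` iff the Boolean entry is 1. -/
abbrev BMat (ι : Type*) := ι → ι → Prop

namespace BMat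
variable {ι : Type*}

/-- Entrywise order: every 1-entry of `A` is a 1-entry of `B`. -/
def le (A B : BMat ι) : Prop := ∀ i j, A i j → B i j
/-- Entrywise OR. -/
def add (A B : BMat ι) : BMat ι := fun i j => A i j ∨ B i j
/-- Boolean matrix product. -/
def mul (A B : BMat ι) : BMat ι := fun i k => ∃ j, A i j ∧ B j k
/-- Entrywise Boolean difference. -/
def sub (A B : BMat ι) : BMat ι := fun i j => A i j ∧ ¬ B i j
/-- Identity matrix. -/
def one : BMat ι := fun i j => i = j
/-- Powers. -/
def pow (A : BMat ι) : ℕ → BMat ι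
  | 0 => one
  | k + 1 => mul A (pow A k)
/-- Kleene (reflexive-transitive) closure. -/
def star (A : BMat ι) : BMat ι := fun i j => ∃ k, pow A k i j
/-- `I_{A,i}`: the matrix agreeing with `A` on row `i`, zero elsewhere. -/
def row (A : BMat ι) (i : ι) : BMat ι := fun x y => x = i ∧ A x y
/-- `J_{A,i}`: the matrix agreeing with `A` on column `i`, zero elsewhere. -/
def col (A : BMat ι) (i : ι) : BMat ι := fun x y => y = i ∧ A x y
/-- Square. -/
def sq (A : BMat ι) : BMat ι := mul A A

end BMat

def Pseq {ι : Type*} (X : BMat ι) : ℕ → BMat ι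
  | 0 => X
  | k + 1 =>
      BMat.add (Pseq X k)
        (BMat.add (BMat.mul (Pseq X k) (Pseq X k))
          (BMat.mul (Pseq X k) (BMat.mul (Pseq X k) (Pseq X k))))

section Aux
variable {ι : Type*}

lemma pow_add_iff (X : BMat ι) (a b : ℕ) (i j : ι) :
    BMat.pow X (a + b) i j ↔ ∃ v, BMat.pow X a i v ∧ BMat.pow X b v j := by
  induction a generalizing i with
  | zero =>
    simp only [Nat.zero_add]
    constructor
    · intro h; exact ⟨i, rfl, h⟩
    · rintro ⟨v, hv, h⟩; cases hv; exact h
  | succ a ih =>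
    have : a + 1 + b = (a + b) + 1 := by omega
    rw [this]
    constructor
    · rintro ⟨w, hw, h⟩
      rcases (ih w).mp h with ⟨v, h1, h2⟩
      exact ⟨v, ⟨w, hw, h1⟩, h2⟩
    · rintro ⟨v, ⟨w, hw, h1⟩, h2⟩
      exact ⟨w, hw, (ih w).mpr ⟨v, h1, h2⟩⟩

lemma path_fun (X : BMat ι) : ∀ (m : ℕ) (i j : ι), BMat.pow X m i j →
    ∃ f : ℕ → ι, f 0 = i ∧ f m = j ∧ ∀ t < m, X (f t) (f (t + 1)) := by
  intro m
  induction m with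
  | zero =>
    intro i j h
    exact ⟨fun _ => i, rfl, h, by omega⟩
  | succ m ih =>
    rintro i j ⟨v, hiv, h⟩
    obtain ⟨f, hf0, hfm, hfe⟩ := ih v j h
    refine ⟨fun t => if t = 0 then i else f (t - 1), by simp, by simp [hfm], ?_⟩
    intro t ht
    rcases Nat.eq_zero_or_pos t with rfl | hpos
    · simpa [hf0] using hiv
    · have h1 : ¬ (t = 0) := by omega
      have h2 : ¬ (t + 1 = 0) := by omega
      simp only [h1, h2, if_false]
      have : t + 1 - 1 = (t - 1) + 1 := by omega
      rw [this]
      exact hfe (t - 1) (by omega)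

lemma seg (X : BMat ι) (f : ℕ → ι) (m : ℕ) (hfe : ∀ t < m, X (f t) (f (t + 1))) :
    ∀ d a, a + d ≤ m → BMat.pow X d (f a) (f (a + d)) := by
  intro d
  induction d with
  | zero => intro a _; exact rfl
  | succ d ih =>
    intro a ha
    refine ⟨f (a + 1), hfe a (by omega), ?_⟩
    have : a + (d + 1) = (a + 1) + d := by omega
    rw [this]
    exact ih (a + 1) (by omega)

lemma shorten {n : ℕ} (X : BMat (Fin n)) : ∀ (m : ℕ) (i j : Fin n),
    BMat.pow X m i j → ∃ m', m' < n ∧ BMat.pow X m' i j := by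
  intro m
  induction m using Nat.strong_induction_on with
  | _ m IH =>
  intro i j h
  by_cases hm : m < n
  · exact ⟨m, hm, h⟩
  · push_neg at hm
    obtain ⟨f, hf0, hfm, hfe⟩ := path_fun X m i j h
    have hcard : Fintype.card (Fin n) < Fintype.card (Fin (n + 1)) := by simp
    obtain ⟨a, b, hab, hfab⟩ :=
      Fintype.exists_ne_map_eq_of_card_lt (fun t : Fin (n + 1) => f t.val) hcard
    -- wlog a < b
    have key : ∀ a b : Fin (n + 1), (a : ℕ) < b → f a.val = f b.val →
        ∃ m', m' < n ∧ BMat.pow X m' i j := by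
      intro a b hlt heq
      have hbm : (b : ℕ) ≤ m := by omega
      have h1 : BMat.pow X a.val (f 0) (f (0 + a.val)) := seg X f m hfe a.val 0 (by omega)
      have h2 : BMat.pow X (m - b.val) (f b.val) (f (b.val + (m - b.val))) :=
        seg X f m hfe (m - b.val) b.val (by omega)
      have hbb : b.val + (m - b.val) = m := by omega
      rw [hbb, hfm] at h2
      rw [Nat.zero_add] at h1
      rw [hf0] at h1
      rw [← heq] at h2
      have hc : BMat.pow X (a.val + (m - b.val)) i j :=
        (pow_add_iff X a.val (m - b.val) i j).mpr ⟨f a.val, h1, h2⟩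
      exact IH (a.val + (m - b.val)) (by omega) i j hc
    rcases lt_or_gt_of_ne (fun h' : (a:ℕ) = (b:ℕ) => hab (Fin.ext h')) with h' | h'
    · exact key a b h' hfab
    · exact key b a h' hfab.symm

lemma pseq_iff {ι : Type*} (X : BMat ι) (k : ℕ) (i j : ι) :
    Pseq X k i j ↔ ∃ m, 1 ≤ m ∧ m ≤ 3 ^ k ∧ BMat.pow X m i j := by
  induction k generalizing i j with
  | zero =>
    simp only [Pseq, pow_zero]
    constructor
    · intro h; exact ⟨1, le_refl _, le_refl _, j, h, rfl⟩
    · rintro ⟨m, h1, h2, hp⟩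
      have : m = 1 := by omega
      subst this
      rcases hp with ⟨v, hv, hvj⟩
      cases hvj; exact hv
  | succ k ih =>
    have ht : 1 ≤ 3 ^ k := Nat.one_le_pow _ _ (by norm_num)
    constructor
    · rintro (h | ⟨v, h1, h2⟩ | ⟨v, h1, w, h2, h3⟩)
      · obtain ⟨m, hm1, hm2, hp⟩ := (ih i j).mp h
        exact ⟨m, hm1, le_trans hm2 (Nat.pow_le_pow_right (by norm_num) (by omega)), hp⟩
      · obtain ⟨m1, hm11, hm12, hp1⟩ := (ih i v).mp h1
        obtain ⟨m2, hm21, hm22, hp2⟩ := (ih v j).mp h2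
        refine ⟨m1 + m2, by omega, ?_, (pow_add_iff X m1 m2 i j).mpr ⟨v, hp1, hp2⟩⟩
        have : (3:ℕ) ^ (k + 1) = 3 ^ k + 3 ^ k + 3 ^ k := by ring
        omega
      · obtain ⟨m1, hm11, hm12, hp1⟩ := (ih i v).mp h1
        obtain ⟨m2, hm21, hm22, hp2⟩ := (ih v w).mp h2
        obtain ⟨m3, hm31, hm32, hp3⟩ := (ih w j).mp h3
        refine ⟨m1 + m2 + m3, by omega, ?_, ?_⟩
        · have : (3:ℕ) ^ (k + 1) = 3 ^ k + 3 ^ k + 3 ^ k := by ring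
          omega
        · exact (pow_add_iff X (m1 + m2) m3 i j).mpr
            ⟨w, (pow_add_iff X m1 m2 i w).mpr ⟨v, hp1, hp2⟩, hp3⟩
    · rintro ⟨m, hm1, hm2, hp⟩
      set t := 3 ^ k with htdef
      have hm2' : m ≤ 3 * t := by
        have : (3:ℕ) ^ (k + 1) = 3 * t := by rw [htdef]; ring
        omega
      by_cases hc1 : m ≤ t
      · exact Or.inl ((ih i j).mpr ⟨m, hm1, hc1, hp⟩)
      · by_cases hc2 : m ≤ 2 * t
        · have hsplit : m = t + (m - t) := by omega
          rw [hsplit] at hp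
          obtain ⟨v, h1, h2⟩ := (pow_add_iff X t (m - t) i j).mp hp
          exact Or.inr (Or.inl ⟨v, (ih i v).mpr ⟨t, ht, le_refl _, h1⟩,
            (ih v j).mpr ⟨m - t, by omega, by omega, h2⟩⟩)
        · have hsplit : m = t + (t + (m - 2 * t)) := by omega
          rw [hsplit] at hp
          obtain ⟨v, h1, h2⟩ := (pow_add_iff X t (t + (m - 2 * t)) i j).mp hp
          obtain ⟨w, h3, h4⟩ := (pow_add_iff X t (m - 2 * t) v j).mp h2
          exact Or.inr (Or.inr ⟨v, (ih i v).mpr ⟨t, ht, le_refl _, h1⟩,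
            w, (ih v w).mpr ⟨t, ht, le_refl _, h3⟩,
            (ih w j).mpr ⟨m - 2 * t, by omega, by omega, h4⟩⟩)

end Aux

/-- `I_n + P_{⌈log₂ n⌉}` equals the Kleene closure `X*`. -/
theorem stmt3 (n : ℕ) (X : BMat (Fin n)) :
    BMat.add BMat.one (Pseq X (Nat.clog 2 n)) = BMat.star X := by
  funext i j
  apply propext
  constructor
  · rintro (h | h)
    · exact ⟨0, h⟩
    · obtain ⟨m, _, _, hp⟩ := (pseq_iff X _ i j).mp h
      exact ⟨m, hp⟩
  · rintro ⟨k, hk⟩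
    obtain ⟨m, hmn, hp⟩ := shorten X k i j hk
    rcases Nat.eq_zero_or_pos m with rfl | hpos
    · exact Or.inl hp
    · refine Or.inr ((pseq_iff X _ i j).mpr ⟨m, hpos, ?_, hp⟩)
      have hn : 0 < n := i.pos
      have h1 : n ≤ 2 ^ Nat.clog 2 n := Nat.le_pow_clog (by norm_num) n
      have h2 : (2:ℕ) ^ Nat.clog 2 n ≤ 3 ^ Nat.clog 2 n :=
        Nat.pow_le_pow_left (by norm_num) _
      omega
end

section
/- Let X be a 2m×2m Boolean matrix with m×m blocks A, B, C, D. Define P = D*, E₁ = (A + B·P²·C)*, H₂ = (D + C·E₁²·B)*, E₂ = E₁·B·H₂²·C·E₁, F₁ = E₁²·B·P, F₂ = E₁·B·H₂², G₁ = P·C·E₁², G₂ = H₂²·C·E₁, H₁ = P·C·E₁²·B·P. Then X* equals the block matrix with blocks E₁+E₂, F₁+F₂, G₁+G₂, H₁+H₂. -/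
def blkA {m : ℕ} (X : BMat (Fin m ⊕ Fin m)) : BMat (Fin m) := fun i j => X (Sum.inl i) (Sum.inl j)
def blkB {m : ℕ} (X : BMat (Fin m ⊕ Fin m)) : BMat (Fin m) := fun i j => X (Sum.inl i) (Sum.inr j)
def blkC {m : ℕ} (X : BMat (Fin m ⊕ Fin m)) : BMat (Fin m) := fun i j => X (Sum.inr i) (Sum.inl j)
def blkD {m : ℕ} (X : BMat (Fin m ⊕ Fin m)) : BMat (Fin m) := fun i j => X (Sum.inr i) (Sum.inr j)

/-- Assemble a `2m×2m` Boolean matrix from four `m×m` blocks. -/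
def fromBlocks {m : ℕ} (A B C D : BMat (Fin m)) : BMat (Fin m ⊕ Fin m) :=
  fun x y => match x, y with
  | Sum.inl i, Sum.inl j => A i j
  | Sum.inl i, Sum.inr j => B i j
  | Sum.inr i, Sum.inl j => C i j
  | Sum.inr i, Sum.inr j => D i j


open Relation

namespace Stmt6Aux

variable {ι α β : Type*}

lemma star_iff (A : BMat ι) (i j : ι) : BMat.star A i j ↔ ReflTransGen A i j := by
  constructor
  · rintro ⟨k, h⟩
    induction k generalizing i with
    | zero => exact (show i = j from h) ▸ ReflTransGen.refl
    | succ n ih =>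
      obtain ⟨t, hA, hp⟩ := h
      exact ReflTransGen.head hA (ih t hp)
  · intro h
    induction h using ReflTransGen.head_induction_on with
    | refl => exact ⟨0, rfl⟩
    | head hstep _ ih =>
      obtain ⟨k, hk⟩ := ih
      exact ⟨k + 1, _, hstep, hk⟩

lemma star_sq_iff (A : BMat ι) (i j : ι) :
    BMat.sq (BMat.star A) i j ↔ ReflTransGen A i j := by
  constructor
  · rintro ⟨k, h1, h2⟩
    exact ((star_iff A i k).1 h1).trans ((star_iff A k j).1 h2)
  · intro h
    exact ⟨i, (star_iff A i i).2 .refl, (star_iff A i j).2 h⟩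

section Rel
variable (R : α ⊕ β → α ⊕ β → Prop)

def a : α → α → Prop := fun i j => R (.inl i) (.inl j)
def b : α → β → Prop := fun i j => R (.inl i) (.inr j)
def c : β → α → Prop := fun i j => R (.inr i) (.inl j)
def d : β → β → Prop := fun i j => R (.inr i) (.inr j)

def p : β → β → Prop := ReflTransGen (d R)
def e1gen : α → α → Prop := fun i j =>
  a R i j ∨ ∃ u v, b R i u ∧ p R u v ∧ c R v j
def e1 : α → α → Prop := ReflTransGen (e1gen R)
def h2gen : β → β → Prop := fun i j =>
  d R i j ∨ ∃ u v, c R i u ∧ e1 R u v ∧ b R v j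
def h2 : β → β → Prop := ReflTransGen (h2gen R)

variable {R}

lemma p_to {i j : β} (h : p R i j) : ReflTransGen R (.inr i) (.inr j) := by
  induction h with
  | refl => exact .refl
  | tail _hab hbc ih => exact ih.tail hbc

lemma e1_to {i j : α} (h : e1 R i j) : ReflTransGen R (.inl i) (.inl j) := by
  induction h with
  | refl => exact .refl
  | tail _hab hbc ih =>
    rcases hbc with h' | ⟨u, v, hb, hp, hc⟩
    · exact ih.tail h'
    · exact ih.trans (ReflTransGen.head hb ((p_to hp).tail hc))

lemma h2_to {i j : β} (h : h2 R i j) : ReflTransGen R (.inr i) (.inr j) := by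
  induction h with
  | refl => exact .refl
  | tail _hab hbc ih =>
    rcases hbc with h' | ⟨u, v, hc, he, hb⟩
    · exact ih.tail h'
    · exact ih.trans (ReflTransGen.head hc ((e1_to he).tail hb))

lemma p_le_h2 {i j : β} (h : p R i j) : h2 R i j := by
  induction h with
  | refl => exact .refl
  | tail _hab hbc ih => exact ih.tail (Or.inl hbc)

def Phi (R : α ⊕ β → α ⊕ β → Prop) : α ⊕ β → α ⊕ β → Prop := fun x y => match x, y with
  | .inl i, .inl j => e1 R i j
  | .inl i, .inr j => ∃ u v, e1 R i u ∧ b R u v ∧ p R v j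
  | .inr i, .inl j => ∃ u v, p R i u ∧ c R u v ∧ e1 R v j
  | .inr i, .inr j => p R i j ∨
      ∃ u v s t, p R i u ∧ c R u v ∧ e1 R v s ∧ b R s t ∧ p R t j

lemma to_Phi {x y : α ⊕ β} (h : ReflTransGen R x y) : Phi R x y := by
  induction h using ReflTransGen.head_induction_on with
  | refl =>
    rcases y with j | j
    · exact ReflTransGen.refl
    · exact Or.inl ReflTransGen.refl
  | head hstep htail ih =>
    clear htail
    rename_i x' z
    rcases x' with i | i <;> rcases z with k | k <;> rcases y with j | j
    · exact ReflTransGen.head (Or.inl hstep) ih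
    · obtain ⟨u, v, he, hb, hp⟩ := ih
      exact ⟨u, v, ReflTransGen.head (Or.inl hstep) he, hb, hp⟩
    · obtain ⟨u, v, hp, hc, he⟩ := ih
      exact ReflTransGen.head (Or.inr ⟨k, u, hstep, hp, hc⟩) he
    · rcases ih with hp | ⟨u, v, s, t, hp, hc, he, hb, hp2⟩
      · exact ⟨i, k, ReflTransGen.refl, hstep, hp⟩
      · exact ⟨s, t, ReflTransGen.head (Or.inr ⟨k, u, hstep, hp, hc⟩) he, hb, hp2⟩
    · exact ⟨i, k, ReflTransGen.refl, hstep, ih⟩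
    · obtain ⟨u, v, he, hb, hp⟩ := ih
      exact Or.inr ⟨i, k, u, v, ReflTransGen.refl, hstep, he, hb, hp⟩
    · obtain ⟨u, v, hp, hc, he⟩ := ih
      exact ⟨u, v, ReflTransGen.head hstep hp, hc, he⟩
    · rcases ih with hp | ⟨u, v, s, t, hp, hc, he, hb, hp2⟩
      · exact Or.inl (ReflTransGen.head hstep hp)
      · exact Or.inr ⟨u, v, s, t, ReflTransGen.head hstep hp, hc, he, hb, hp2⟩

lemma block_ll {i j : α} : ReflTransGen R (.inl i) (.inl j) ↔ e1 R i j :=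
  ⟨fun h => to_Phi h, e1_to⟩

lemma block_lr {i j} : ReflTransGen R (.inl i) (.inr j) ↔
    ∃ u v, e1 R i u ∧ b R u v ∧ p R v j :=
  ⟨fun h => to_Phi h, fun ⟨_, _, he, hb, hp⟩ => ((e1_to he).tail hb).trans (p_to hp)⟩

lemma block_rl {i j} : ReflTransGen R (.inr i) (.inl j) ↔
    ∃ u v, p R i u ∧ c R u v ∧ e1 R v j :=
  ⟨fun h => to_Phi h, fun ⟨_, _, hp, hc, he⟩ => ((p_to hp).tail hc).trans (e1_to he)⟩

lemma block_rr {i j : β} : ReflTransGen R (.inr i) (.inr j) ↔ h2 R i j := by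
  constructor
  · intro h
    rcases to_Phi h with hp | ⟨u, v, s, t, hp, hc, he, hb, hp2⟩
    · exact p_le_h2 hp
    · exact ((p_le_h2 hp).tail (Or.inr ⟨v, s, hc, he, hb⟩)).trans (p_le_h2 hp2)
  · exact h2_to

end Rel

section Sq
variable (R : BMat (α ⊕ α))

def E1s : BMat α :=
  BMat.star (BMat.add (a R) (BMat.mul (b R) (BMat.mul (BMat.sq (BMat.star (d R))) (c R))))
def H2s : BMat α :=
  BMat.star (BMat.add (d R) (BMat.mul (c R) (BMat.mul (BMat.sq (E1s R)) (b R))))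

lemma gen1_eq :
    BMat.add (a R) (BMat.mul (b R) (BMat.mul (BMat.sq (BMat.star (d R))) (c R))) = e1gen R := by
  funext i j
  simp only [BMat.add, BMat.mul, e1gen, eq_iff_iff]
  constructor
  · rintro (h | ⟨u, hb, v, hsq, hc⟩)
    · exact Or.inl h
    · exact Or.inr ⟨u, v, hb, (star_sq_iff (d R) u v).1 hsq, hc⟩
  · rintro (h | ⟨u, v, hb, hp, hc⟩)
    · exact Or.inl h
    · exact Or.inr ⟨u, hb, v, (star_sq_iff (d R) u v).2 hp, hc⟩

lemma hE1s (i j : α) : E1s R i j ↔ e1 R i j := by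
  unfold E1s
  rw [star_iff, gen1_eq]
  exact Iff.rfl

lemma hsqE1s (i j : α) : BMat.sq (E1s R) i j ↔ e1 R i j := by
  unfold E1s
  rw [star_sq_iff, gen1_eq]
  exact Iff.rfl

lemma gen2_eq :
    BMat.add (d R) (BMat.mul (c R) (BMat.mul (BMat.sq (E1s R)) (b R))) = h2gen R := by
  funext i j
  simp only [BMat.add, BMat.mul, h2gen, eq_iff_iff]
  constructor
  · rintro (h | ⟨u, hc, v, hsq, hb⟩)
    · exact Or.inl h
    · exact Or.inr ⟨u, v, hc, (hsqE1s R u v).1 hsq, hb⟩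
  · rintro (h | ⟨u, v, hc, he, hb⟩)
    · exact Or.inl h
    · exact Or.inr ⟨u, hc, v, (hsqE1s R u v).2 he, hb⟩

lemma hH2s (i j : α) : H2s R i j ↔ h2 R i j := by
  unfold H2s
  rw [star_iff, gen2_eq]
  exact Iff.rfl

lemma hsqH2s (i j : α) : BMat.sq (H2s R) i j ↔ h2 R i j := by
  unfold H2s
  rw [star_sq_iff, gen2_eq]
  exact Iff.rfl

lemma TL (i j : α) :
    BMat.add (E1s R)
      (BMat.mul (E1s R) (BMat.mul (b R) (BMat.mul (BMat.sq (H2s R)) (BMat.mul (c R) (E1s R))))) i j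
      ↔ BMat.star R (.inl i) (.inl j) := by
  rw [star_iff, block_ll]
  constructor
  · intro h
    obtain h | h : _ ∨ _ := h
    · exact (hE1s R i j).1 h
    · simp only [BMat.mul] at h
      obtain ⟨u, h1, v, h2, w, h3, s, h4, h5⟩ := h
      have : ReflTransGen R (.inl i) (.inl j) :=
        (((((e1_to ((hE1s R i u).1 h1)).tail h2).trans
          (h2_to ((hsqH2s R v w).1 h3))).tail h4)).trans (e1_to ((hE1s R s j).1 h5))
      exact to_Phi this
  · intro h
    exact Or.inl ((hE1s R i j).2 h)

lemma TR (i j : α) :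
    BMat.add (BMat.mul (BMat.sq (E1s R)) (BMat.mul (b R) (BMat.star (d R))))
      (BMat.mul (E1s R) (BMat.mul (b R) (BMat.sq (H2s R)))) i j
      ↔ BMat.star R (.inl i) (.inr j) := by
  rw [star_iff, block_lr]
  constructor
  · intro h
    obtain h | h : _ ∨ _ := h
    · simp only [BMat.mul] at h
      obtain ⟨u, hsq, v, hb, hp⟩ := h
      exact ⟨u, v, (hsqE1s R i u).1 hsq, hb, (star_iff (d R) v j).1 hp⟩
    · simp only [BMat.mul] at h
      obtain ⟨u, he, v, hb, hsq⟩ := h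
      have : ReflTransGen R (.inl i) (.inr j) :=
        ((e1_to ((hE1s R i u).1 he)).tail hb).trans (h2_to ((hsqH2s R v j).1 hsq))
      exact to_Phi this
  · rintro ⟨u, v, he, hb, hp⟩
    exact Or.inl ⟨u, (hsqE1s R i u).2 he, v, hb, (star_iff (d R) v j).2 hp⟩

lemma BL (i j : α) :
    BMat.add (BMat.mul (BMat.star (d R)) (BMat.mul (c R) (BMat.sq (E1s R))))
      (BMat.mul (BMat.sq (H2s R)) (BMat.mul (c R) (E1s R))) i j
      ↔ BMat.star R (.inr i) (.inl j) := by
  rw [star_iff, block_rl]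
  constructor
  · intro h
    obtain h | h : _ ∨ _ := h
    · simp only [BMat.mul] at h
      obtain ⟨u, hp, v, hc, hsq⟩ := h
      exact ⟨u, v, (star_iff (d R) i u).1 hp, hc, (hsqE1s R v j).1 hsq⟩
    · simp only [BMat.mul] at h
      obtain ⟨u, hsq, v, hc, he⟩ := h
      have : ReflTransGen R (.inr i) (.inl j) :=
        ((h2_to ((hsqH2s R i u).1 hsq)).tail hc).trans (e1_to ((hE1s R v j).1 he))
      exact to_Phi this
  · rintro ⟨u, v, hp, hc, he⟩
    exact Or.inl ⟨u, (star_iff (d R) i u).2 hp, v, hc, (hsqE1s R v j).2 he⟩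

lemma BR (i j : α) :
    BMat.add
      (BMat.mul (BMat.star (d R))
        (BMat.mul (c R) (BMat.mul (BMat.sq (E1s R)) (BMat.mul (b R) (BMat.star (d R))))))
      (H2s R) i j
      ↔ BMat.star R (.inr i) (.inr j) := by
  rw [star_iff, block_rr]
  constructor
  · intro h
    obtain h | h : _ ∨ _ := h
    · simp only [BMat.mul] at h
      obtain ⟨u, hp, v, hc, w, hsq, s, hb, hp2⟩ := h
      have : ReflTransGen R (.inr i) (.inr j) :=
        ((((p_to ((star_iff (d R) i u).1 hp)).tail hc).trans
          (e1_to ((hsqE1s R v w).1 hsq))).tail hb).trans (p_to ((star_iff (d R) s j).1 hp2))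
      exact block_rr.1 this
    · exact (hH2s R i j).1 h
  · intro h
    exact Or.inr ((hH2s R i j).2 h)

end Sq
end Stmt6Aux


/-- The combined decomposition `H` of the paper: `X*` equals the block matrix
with blocks `E₁+E₂`, `F₁+F₂`, `G₁+G₂`, `H₁+H₂`. -/
theorem stmt6 (m : ℕ) (X : BMat (Fin m ⊕ Fin m)) :
    let A := blkA X; let B := blkB X; let C := blkC X; let D := blkD X
    let P := BMat.star D
    let E1 := BMat.star (BMat.add A (BMat.mul B (BMat.mul (BMat.sq P) C)))
    let H2 := BMat.star (BMat.add D (BMat.mul C (BMat.mul (BMat.sq E1) B)))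
    let E2 := BMat.mul E1 (BMat.mul B (BMat.mul (BMat.sq H2) (BMat.mul C E1)))
    let F1 := BMat.mul (BMat.sq E1) (BMat.mul B P)
    let F2 := BMat.mul E1 (BMat.mul B (BMat.sq H2))
    let G1 := BMat.mul P (BMat.mul C (BMat.sq E1))
    let G2 := BMat.mul (BMat.sq H2) (BMat.mul C E1)
    let H1 := BMat.mul P (BMat.mul C (BMat.mul (BMat.sq E1) (BMat.mul B P)))
    fromBlocks (BMat.add E1 E2) (BMat.add F1 F2) (BMat.add G1 G2) (BMat.add H1 H2)
      = BMat.star X := by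
  intro A B C D P E1 H2 E2 F1 F2 G1 G2 H1
  funext x y
  rcases x with i | i <;> rcases y with j | j
  · exact propext (Stmt6Aux.TL X i j)
  · exact propext (Stmt6Aux.TR X i j)
  · exact propext (Stmt6Aux.BL X i j)
  · exact propext (Stmt6Aux.BR X i j)
end

section
/- Let X be an n×n Boolean matrix with X = X*, and let ΔX be a Boolean update matrix that is i-transitive (I_{ΔX,i} = I_{ΔX,i}·X and J_{ΔX,i} = X·J_{ΔX,i}) and i-complete (ΔX = J_{ΔX,i}·I_{ΔX,i} + X·I_{ΔX,i} + J_{ΔX,i}·X) with respect to X. Then X + ΔX = (X + I_{ΔX,i} + J_{ΔX,i})². -/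

lemma BMat.pow_trans {ι : Type*} (A : BMat ι) :
    ∀ (k m : ℕ) (x y z : ι), BMat.pow A k x y → BMat.pow A m y z →
      BMat.pow A (k + m) x z := by
  intro k
  induction k with
  | zero => intro m x y z h1 h2; cases h1; simpa using h2
  | succ k ih =>
    intro m x y z h1 h2
    obtain ⟨w, hw, hp⟩ := h1
    rw [Nat.add_right_comm]
    exact ⟨w, hw, ih m w y z hp h2⟩

/-- If `X = X*` and `ΔX` is `i`-transitive and `i`-complete w.r.t. `X`, then
`X + ΔX = (X + I_{ΔX,i} + J_{ΔX,i})²`. -/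
theorem stmt10 (n : ℕ) (X ΔX : BMat (Fin n)) (i : Fin n)
    (hX : X = BMat.star X)
    (ht1 : BMat.row ΔX i = BMat.mul (BMat.row ΔX i) X)
    (ht2 : BMat.col ΔX i = BMat.mul X (BMat.col ΔX i))
    (hc : ΔX = BMat.add (BMat.mul (BMat.col ΔX i) (BMat.row ΔX i))
        (BMat.add (BMat.mul X (BMat.row ΔX i)) (BMat.mul (BMat.col ΔX i) X))) :
    BMat.add X ΔX =
      BMat.sq (BMat.add X (BMat.add (BMat.row ΔX i) (BMat.col ΔX i))) := by
  have hrefl : ∀ a, X a a := by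
    intro a; rw [hX]; exact ⟨0, rfl⟩
  have htrans : ∀ x y z, X x y → X y z → X x z := by
    intro x y z h1 h2
    rw [hX] at h1 h2 ⊢
    obtain ⟨k, hk⟩ := h1
    obtain ⟨m, hm⟩ := h2
    exact ⟨k + m, BMat.pow_trans X k m x y z hk hm⟩
  funext x y
  apply propext
  constructor
  · rintro (h | h)
    · exact ⟨y, Or.inl h, Or.inl (hrefl y)⟩
    · have := (congrFun (congrFun hc x) y).mp h
      rcases this with ⟨k, hJ, hI⟩ | ⟨k, hx, hI⟩ | ⟨k, hJ, hx⟩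
      · exact ⟨k, Or.inr (Or.inr hJ), Or.inr (Or.inl hI)⟩
      · exact ⟨k, Or.inl hx, Or.inr (Or.inl hI)⟩
      · exact ⟨k, Or.inr (Or.inr hJ), Or.inl hx⟩
  · rintro ⟨k, (h1 | h1 | h1), (h2 | h2 | h2)⟩
    · exact Or.inl (htrans x k y h1 h2)
    · -- X, I : mul X I ⊆ ΔX
      exact Or.inr ((congrFun (congrFun hc x) y).mpr (Or.inr (Or.inl ⟨k, h1, h2⟩)))
    · -- X, J : mul X J = J ⊆ ΔX
      have : BMat.col ΔX i x y := (congrFun (congrFun ht2 x) y) ▸ ⟨k, h1, h2⟩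
      exact Or.inr this.2
    · -- I, X : mul I X = I ⊆ ΔX
      have : BMat.row ΔX i x y := (congrFun (congrFun ht1 x) y) ▸ ⟨k, h1, h2⟩
      exact Or.inr this.2
    · -- I, I : k = i, x = i, ΔX i y
      obtain ⟨hx, _⟩ := h1
      obtain ⟨hk, hd⟩ := h2
      subst hk; subst hx
      exact Or.inr hd
    · -- I, J : x = i, y = i, X i i
      obtain ⟨hx, _⟩ := h1
      obtain ⟨hy, _⟩ := h2
      subst hx; subst hy
      exact Or.inl (hrefl _)
    · -- J, X ⊆ ΔX
      exact Or.inr ((congrFun (congrFun hc x) y).mpr (Or.inr (Or.inr ⟨k, h1, h2⟩)))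
    · -- J, I ⊆ ΔX
      exact Or.inr ((congrFun (congrFun hc x) y).mpr (Or.inl ⟨k, h1, h2⟩))
    · -- J, J : k = i, y = i, ΔX x i
      obtain ⟨hk, hd⟩ := h1
      obtain ⟨hy, _⟩ := h2
      subst hk; subst hy
      exact Or.inr hd
end

section
/- Let G be a directed acyclic graph on n vertices and let M be the n×n integer matrix with M[u,v] equal to the number of distinct directed paths from u to v (where the empty path counts, so M[u,u] ≥ 1). If an edge (x,y) not in G is inserted and the resulting graph G' is still acyclic, then the path-count matrix M' of G' satisfies M' = M + J·I, where J is the column vector J[z] = M[z,x] and I is the row vector I[z] = M[y,z]. -/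
/-!
A path of the enlarged graph either avoids the new edge `(x, y)`, and is then a path of the old
graph, or it passes through `y` exactly once, because acyclicity forbids repeated vertices.
Splitting it at that visit of `y` gives a bijection between the paths through the new edge and
pairs of old paths `u ⇝ x`, `y ⇝ v`; since `¬ G x y`, no old path is of this split form.
-/

/-- Number of directed paths (walks) from `u` to `v`: a path is encoded by the list `p`
of vertices following `u`; the empty path from `u` to `u` counts. In a DAG this set is
finite and every walk is a path. -/
noncomputable def pathCount (n : ℕ) (G : Fin n → Fin n → Prop) (u v : Fin n) : ℕ :=
  Set.ncard {p : List (Fin n) |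
    List.Chain G u p ∧ (u :: p).getLast (List.cons_ne_nil u p) = v}

open List Relation

section Paths

variable {α : Type*} {r : α → α → Prop}

theorem List.IsChain.nodup_of_irreflexive_transGen (hr : ∀ a, ¬ TransGen r a a) {l : List α}
    (h : l.IsChain r) : l.Nodup :=
  (isChain_iff_pairwise.1 (h.imp fun _ _ => TransGen.single)).imp (S := (· ≠ ·))
    fun hab hEq => hr _ (hEq ▸ hab)

theorem List.isChain_cons_append_singleton_iff {a b : α} {l : List α} :
    (a :: (l ++ [b])).IsChain r ↔
      (a :: l).IsChain r ∧ r ((a :: l).getLast (cons_ne_nil a l)) b := by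
  rw [← cons_append, isChain_append]
  simp [getLast?_eq_some_getLast]

-- `pathCount n G u v` unfolds to `(paths G u v).ncard`.
def paths (r : α → α → Prop) (u v : α) : Set (List α) :=
  {p | (u :: p).IsChain r ∧ (u :: p).getLast (cons_ne_nil u p) = v}

theorem paths_mono {r' : α → α → Prop} (h : ∀ a b, r a b → r' a b) (u v : α) :
    paths r u v ⊆ paths r' u v :=
  fun _ hp => ⟨hp.1.imp h, hp.2⟩

theorem finite_paths [Fintype α] (hr : ∀ a, ¬ TransGen r a a) (u v : α) :
    (paths r u v).Finite :=
  (finite_length_le α (Fintype.card α)).subset fun p hp => by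
    have := (hp.1.nodup_of_irreflexive_transGen hr).length_le_card
    rw [length_cons] at this
    exact (Nat.le_succ p.length).trans this

theorem append_cons_mem_paths_iff {u v y : α} {q s : List α} :
    q ++ y :: s ∈ paths r u v ↔
      (u :: q).IsChain r ∧ r ((u :: q).getLast (cons_ne_nil u q)) y ∧ s ∈ paths r y v := by
  have : (u :: (q ++ y :: s)).getLast (cons_ne_nil _ _) = (y :: s).getLast (cons_ne_nil _ _) := by
    simp only [← cons_append]; exact getLast_append_of_ne_nil _ _
  simp only [paths, Set.mem_ofPred_eq]
  rw [isChain_cons_split, isChain_cons_append_singleton_iff, this]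
  simp only [and_assoc]

theorem notMem_of_append_cons_mem_paths (hr : ∀ a, ¬ TransGen r a a) {u v y : α}
    {q s : List α} (h : q ++ y :: s ∈ paths r u v) : y ∉ q ∧ y ∉ s := by
  have := (h.1.nodup_of_irreflexive_transGen hr).of_cons
  rw [nodup_append, nodup_cons] at this
  exact ⟨fun hy => this.2.2 y hy y mem_cons_self rfl, this.2.1.1⟩

def insertEdge (r : α → α → Prop) (x y : α) (a b : α) : Prop :=
  r a b ∨ a = x ∧ b = y

theorem List.IsChain.of_insertEdge {x y : α} {l : List α}
    (h : l.IsChain (insertEdge r x y)) (hy : y ∉ l.tail) : l.IsChain r :=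
  h.imp_of_mem_tail_imp fun _ _ _ hb hab => hab.resolve_right fun hxy => hy (hxy.2 ▸ hb)

def joinAt (y : α) (qs : List α × List α) : List α :=
  qs.1 ++ y :: qs.2

variable {x y : α}

theorem joinAt_mem_paths_insertEdge {u v : α} {qs : List α × List α}
    (h : qs ∈ paths r u x ×ˢ paths r y v) : joinAt y qs ∈ paths (insertEdge r x y) u v :=
  append_cons_mem_paths_iff.2 ⟨h.1.1.imp fun _ _ => Or.inl, Or.inr ⟨h.1.2, rfl⟩,
    paths_mono (fun _ _ => Or.inl) y v h.2⟩

theorem paths_insertEdge (hr : ∀ a, ¬ TransGen (insertEdge r x y) a a) (u v : α) :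
    paths (insertEdge r x y) u v = paths r u v ∪ joinAt y '' (paths r u x ×ˢ paths r y v) := by
  refine Set.Subset.antisymm (fun p hp => ?_) <|
    Set.union_subset (paths_mono (fun _ _ => Or.inl) u v)
      (Set.image_subset_iff.2 fun _ => joinAt_mem_paths_insertEdge)
  by_cases hy : y ∈ p
  · obtain ⟨q, s, rfl⟩ := append_of_mem hy
    obtain ⟨hyq, hys⟩ := notMem_of_append_cons_mem_paths hr hp
    obtain ⟨hq, hqy, hs⟩ := append_cons_mem_paths_iff.1 hp
    have hq' : (u :: q).IsChain r := hq.of_insertEdge hyq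
    have hs' : s ∈ paths r y v := ⟨hs.1.of_insertEdge hys, hs.2⟩
    rcases hqy with hqy | ⟨hqx, -⟩
    · exact Or.inl (append_cons_mem_paths_iff.2 ⟨hq', hqy, hs'⟩)
    · exact Or.inr ⟨(q, s), ⟨⟨hq', hqx⟩, hs'⟩, rfl⟩
  · exact Or.inl ⟨hp.1.of_insertEdge hy, hp.2⟩

theorem disjoint_paths_image_joinAt (hxy : ¬ r x y) (u v : α) :
    Disjoint (paths r u v) (joinAt y '' (paths r u x ×ˢ paths r y v)) := by
  rw [Set.disjoint_left]
  rintro _ hp ⟨⟨q, s⟩, ⟨hq, -⟩, rfl⟩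
  exact hxy (hq.2 ▸ (append_cons_mem_paths_iff.1 hp).2.1)

theorem injOn_joinAt (hr : ∀ a, ¬ TransGen (insertEdge r x y) a a) (u v : α) :
    Set.InjOn (joinAt y) (paths r u x ×ˢ paths r y v) := by
  rintro ⟨q, s⟩ hqs ⟨q', s'⟩ - h
  obtain ⟨hyq, hys⟩ := notMem_of_append_cons_mem_paths hr (joinAt_mem_paths_insertEdge hqs)
  obtain ⟨rfl, -, rfl⟩ := (append_cons_inj_of_notMem hyq hys).1 h
  rfl

theorem ncard_paths_insertEdge [Fintype α] (hxy : ¬ r x y)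
    (hr : ∀ a, ¬ TransGen (insertEdge r x y) a a) (u v : α) :
    (paths (insertEdge r x y) u v).ncard =
      (paths r u v).ncard + (paths r u x).ncard * (paths r y v).ncard := by
  have hfin := finite_paths hr u v
  rw [paths_insertEdge hr] at hfin ⊢
  rw [Set.ncard_union_eq (disjoint_paths_image_joinAt hxy u v) (hfin.subset Set.subset_union_left)
    (hfin.subset Set.subset_union_right), (injOn_joinAt hr u v).ncard_image, Set.ncard_prod]

end Paths

theorem stmt12_general (n : ℕ) (G G' : Fin n → Fin n → Prop) (x y : Fin n)
    (hxy : ¬ G x y)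
    (hG' : ∀ u v, G' u v ↔ G u v ∨ (u = x ∧ v = y))
    (hacyc' : ∀ v, ¬ Relation.TransGen G' v v) :
    ∀ u v, pathCount n G' u v
      = pathCount n G u v + pathCount n G u x * pathCount n G y v := by
  obtain rfl : G' = insertEdge G x y := funext₂ fun a b => propext (hG' a b)
  exact ncard_paths_insertEdge hxy hacyc'

/-- Inserting an edge `(x,y)` into a DAG (keeping it acyclic) updates the path-count
matrix by the outer product: `M'[u,v] = M[u,v] + M[u,x]·M[y,v]`. -/
theorem stmt12 (n : ℕ) (G G' : Fin n → Fin n → Prop) (x y : Fin n)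
    (hacyc : ∀ v, ¬ Relation.TransGen G v v)
    (hxy : ¬ G x y)
    (hG' : ∀ u v, G' u v ↔ G u v ∨ (u = x ∧ v = y))
    (hacyc' : ∀ v, ¬ Relation.TransGen G' v v) :
    ∀ u v, pathCount n G' u v
      = pathCount n G u v + pathCount n G u x * pathCount n G y v :=
  stmt12_general n G G' x y hxy hG' hacyc'
end

section
/- Let G' be a directed acyclic graph containing edge (x,y), with path-count matrix M' (M'[u,v] = number of distinct directed paths from u to v). If edge (x,y) is deleted yielding graph G with path-count matrix M, then M = M' − J·I, where J[z] = M[z,x] and I[z] = M[y,z] are counts in the graph G after deletion. -/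
/-!
Split an `r`-walk at its first use of the edge `(x, y)`: it either avoids the edge, or it is a
walk `u ⇝ x` avoiding the edge, followed by the step `x → y` and a walk `y ⇝ v`. In an acyclic
graph the walk `y ⇝ v` cannot use the edge either (it would return to `y`), and `y` occurs only
once on the whole walk, so the decomposition is unique.
-/

open List Relation

variable {α : Type*}

def walks (r : α → α → Prop) (u v : α) : Set (List α) :=
  {p | (u :: p).IsChain r ∧ (u :: p).getLast (cons_ne_nil u p) = v}

def deleteEdge (r : α → α → Prop) (x y : α) (a b : α) : Prop :=
  r a b ∧ ¬(a = x ∧ b = y)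

theorem deleteEdge_le {r : α → α → Prop} {x y : α} ⦃a b : α⦄
    (h : deleteEdge r x y a b) : r a b :=
  h.1

section walks

variable {r r' : α → α → Prop} {u v x y : α} {p q : List α}

@[simp]
theorem nil_mem_walks : [] ∈ walks r u v ↔ u = v := by
  simp [walks]

@[simp]
theorem cons_mem_walks {a : α} : a :: p ∈ walks r u v ↔ r u a ∧ p ∈ walks r a v := by
  simp only [walks, Set.mem_ofPred_eq, isChain_cons_cons, getLast_cons_cons, and_assoc]

theorem walks_mono (h : ∀ ⦃a b⦄, r a b → r' a b) : walks r u v ⊆ walks r' u v :=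
  fun _ hp => ⟨hp.1.imp h, hp.2⟩

theorem append_cons_mem_walks (hp : p ∈ walks r u x) (hxy : r x y) (hq : q ∈ walks r y v) :
    p ++ y :: q ∈ walks r u v := by
  induction p generalizing u with
  | nil => rw [nil_mem_walks] at hp; subst hp; exact cons_mem_walks.2 ⟨hxy, hq⟩
  | cons a p ih =>
    rw [cons_mem_walks] at hp
    rw [cons_append, cons_mem_walks]
    exact ⟨hp.1, ih hp.2⟩

theorem rel_of_append_cons_mem_walks (hp : p ∈ walks r u x) (h : p ++ y :: q ∈ walks r u v) :
    r x y := by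
  induction p generalizing u with
  | nil => rw [nil_mem_walks] at hp; subst hp; exact (cons_mem_walks.1 h).1
  | cons a p ih => rw [cons_mem_walks] at hp; exact ih hp.2 (cons_mem_walks.1 h).2

theorem nodup_of_mem_walks (hr : ∀ a, ¬TransGen r a a) (hp : p ∈ walks r u v) :
    (u :: p).Nodup :=
  (hp.1.imp fun _ _ => TransGen.single).pairwise.imp (S := (· ≠ ·))
    fun hab h => hr _ (h ▸ hab)

theorem walks_finite [Finite α] (hr : ∀ a, ¬TransGen r a a) : (walks r u v).Finite :=
  have : Fintype α := Fintype.ofFinite α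
  (Set.finite_coe_iff.1 (inferInstanceAs (Finite {l : List α // l.Nodup}))).subset
    fun _ hp => (nodup_of_mem_walks hr hp).of_cons

end walks

section deleteEdge

variable {r : α → α → Prop} {u v x y : α} {p : List α}

theorem mem_walks_deleteEdge_or_eq_append_cons (hp : p ∈ walks r u v) :
    p ∈ walks (deleteEdge r x y) u v ∨
      ∃ p₁ ∈ walks (deleteEdge r x y) u x, ∃ q ∈ walks r y v, p = p₁ ++ y :: q := by
  induction p generalizing u with
  | nil => exact .inl (nil_mem_walks.2 (nil_mem_walks.1 hp))
  | cons a p ih =>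
    obtain ⟨hua, hp⟩ := cons_mem_walks.1 hp
    by_cases hedge : u = x ∧ a = y
    · obtain ⟨rfl, rfl⟩ := hedge
      exact .inr ⟨[], nil_mem_walks.2 rfl, p, hp, rfl⟩
    · have hua' : deleteEdge r x y u a := ⟨hua, hedge⟩
      rcases ih hp with hp | ⟨p₁, hp₁, q, hq, rfl⟩
      · exact .inl (cons_mem_walks.2 ⟨hua', hp⟩)
      · exact .inr ⟨a :: p₁, cons_mem_walks.2 ⟨hua', hp₁⟩, q, hq, rfl⟩

theorem disjoint_walks_deleteEdge_image_append_cons :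
    Disjoint (walks (deleteEdge r x y) u v)
      ((fun pq => pq.1 ++ y :: pq.2) ''
        (walks (deleteEdge r x y) u x ×ˢ walks (deleteEdge r x y) y v)) := by
  rw [Set.disjoint_left]
  rintro _ hp ⟨⟨p₁, q⟩, ⟨hp₁, -⟩, rfl⟩
  exact (rel_of_append_cons_mem_walks hp₁ hp).2 ⟨rfl, rfl⟩

variable (hr : ∀ a, ¬TransGen r a a)
include hr

theorem walks_deleteEdge_of_acyclic : walks (deleteEdge r x y) y v = walks r y v := by
  refine (walks_mono deleteEdge_le).antisymm fun q hq => ?_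
  rcases mem_walks_deleteEdge_or_eq_append_cons (x := x) (y := y) hq with
    hq' | ⟨q₁, -, q₂, -, rfl⟩
  · exact hq'
  · exact absurd (by simp) (nodup_cons.1 (nodup_of_mem_walks hr hq)).1

theorem walks_eq_union_image_append_cons (hxy : r x y) :
    walks r u v = walks (deleteEdge r x y) u v ∪
      (fun pq => pq.1 ++ y :: pq.2) ''
        (walks (deleteEdge r x y) u x ×ˢ walks (deleteEdge r x y) y v) := by
  ext p
  constructor
  · intro hp
    rcases mem_walks_deleteEdge_or_eq_append_cons (x := x) (y := y) hp with
      hp | ⟨p₁, hp₁, q, hq, rfl⟩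
    · exact .inl hp
    · exact .inr ⟨(p₁, q), ⟨hp₁, (walks_deleteEdge_of_acyclic hr).symm ▸ hq⟩, rfl⟩
  · rintro (hp | ⟨⟨p₁, q⟩, ⟨hp₁, hq⟩, rfl⟩)
    · exact walks_mono deleteEdge_le hp
    · exact append_cons_mem_walks (walks_mono deleteEdge_le hp₁) hxy
        (walks_mono deleteEdge_le hq)

theorem injOn_append_cons (hxy : r x y) :
    Set.InjOn (fun pq : List α × List α => pq.1 ++ y :: pq.2)
      (walks (deleteEdge r x y) u x ×ˢ walks (deleteEdge r x y) y v) := by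
  rintro ⟨p₁, q₁⟩ ⟨hp₁, hq₁⟩ ⟨p₂, q₂⟩ - heq
  have hwalk := append_cons_mem_walks (walks_mono deleteEdge_le hp₁) hxy
    (walks_mono deleteEdge_le hq₁)
  have hy : y ∉ p₁ ++ q₁ :=
    (nodup_cons.1 (nodup_middle.1 (nodup_of_mem_walks hr hwalk).of_cons)).1
  obtain ⟨rfl, -, rfl⟩ :=
    (append_cons_inj_of_notMem (mt (mem_append_left _) hy) (mt (mem_append_right _) hy)).1 heq
  rfl

theorem ncard_walks_eq_add_mul [Finite α] (hxy : r x y) :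
    (walks r u v).ncard = (walks (deleteEdge r x y) u v).ncard +
      (walks (deleteEdge r x y) u x).ncard * (walks (deleteEdge r x y) y v).ncard := by
  have hfin := walks_finite hr (u := u) (v := v)
  rw [walks_eq_union_image_append_cons hr hxy] at hfin ⊢
  rw [Set.ncard_union_eq disjoint_walks_deleteEdge_image_append_cons
      (hfin.subset Set.subset_union_left) (hfin.subset Set.subset_union_right),
    (injOn_append_cons hr hxy).ncard_image, Set.ncard_prod]

end deleteEdge

theorem pathCount_eq_ncard_walks (n : ℕ) (G : Fin n → Fin n → Prop) (u v : Fin n) :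
    pathCount n G u v = (walks G u v).ncard :=
  rfl

/-- Deleting the edge `(x,y)` from a DAG updates the path-count matrix by subtracting
the outer product: `M = M' − J·I`, where `J[z] = M[z,x]` and `I[z] = M[y,z]` are
counts in the graph after deletion. -/
theorem stmt13 (n : ℕ) (G' G : Fin n → Fin n → Prop) (x y : Fin n)
    (hacyc' : ∀ v, ¬ Relation.TransGen G' v v)
    (hxy : G' x y)
    (hG : ∀ u v, G u v ↔ G' u v ∧ ¬ (u = x ∧ v = y)) :
    ∀ u v, (pathCount n G u v : ℤ)
      = (pathCount n G' u v : ℤ)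
        - (pathCount n G u x : ℤ) * (pathCount n G y v : ℤ) := by
  obtain rfl : G = deleteEdge G' x y := funext₂ fun a b => propext (hG a b)
  intro u v
  simp only [pathCount_eq_ncard_walks, ncard_walks_eq_add_mul hacyc' hxy]
  push_cast
  ring
end
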